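/- arXiv:1307.5777 — 4 statements merged into one kernel-verified Lean document; each statement's English description precedes it below -/
import Mathlib

section
/- If G is a generalized Hadamard matrix (i.e., G · conj(G)ᵀ = q·I_q), then for all p,t ∈ V(n,q): Σ_{s ∈ V(n,q)} (1/s!) · MG(p;s) · conj(MG(t;s)) = (qⁿ/p!) · δ_{p,t}, where s! = Π_i s_i! and δ_{p,t} is 1 if p = t and 0 otherwise. -/
open Finset

/-- `V n q` is the set of weak compositions of `n` into `q` parts. -/
def V (n q : ℕ) : Finset (Fin q → ℕ) :=
  (Fintype.piFinset fun _ : Fin q => Finset.range (n + 1)).filter fun p => ∑ i, p i = n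

open scoped Classical in
/-- The m-polynomial `MG(p; s)` with respect to the matrix `G`. -/
noncomputable def MG {q : ℕ} (n : ℕ) (G : Matrix (Fin q) (Fin q) ℂ)
    (p s : Fin q → ℕ) : ℂ :=
  ∑ r ∈ (Fintype.piFinset fun _ : Fin q => Fintype.piFinset fun _ : Fin q =>
      Finset.range (n + 1)).filter
      (fun r => (∀ i, ∑ j, r i j = s i) ∧ (∀ j, ∑ i, r i j = p j)),
    ((∏ i, Nat.factorial (s i) : ℕ) : ℂ) / ((∏ i, ∏ j, Nat.factorial (r i j) : ℕ) : ℂ) *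
      ∏ i, ∏ j, G i j ^ r i j


/-!
`MG n A s p` is the coefficient of `x^s` in `∏ i, (∑ j, A i j * x j) ^ p i`. Substituting the
linear forms of `B` into those of `A` gives the linear forms of `A * B`, so comparing coefficients
turns `MG` into a representation: `MG (A * B) t p = ∑ s, MG A s p * MG B t s`. Transposing the
contingency tables gives `p! * MG A p s = s! * MG Aᵀ s p`, and conjugation conjugates the entries.
The sum in the theorem is therefore `MG (Gᵀ * conj G) t p / p!`, and `Gᵀ * conj G = q • 1`
because `G` is invertible with `Gᴴ * G = q • 1`; finally `MG (c • 1) t p = c ^ n * δ p t`.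
-/

open MvPolynomial Nat Matrix

variable {q n : ℕ}

lemma mem_V {p : Fin q → ℕ} : p ∈ V n q ↔ ∑ i, p i = n := by
  simp only [V, mem_filter, Fintype.mem_piFinset, mem_range, Nat.lt_succ_iff, and_iff_right_iff_imp]
  rintro rfl i
  exact single_le_sum (fun j _ => Nat.zero_le (p j)) (mem_univ i)

lemma le_of_mem_V {p : Fin q → ℕ} (hp : p ∈ V n q) (i : Fin q) : p i ≤ n :=
  mem_V.1 hp ▸ single_le_sum (fun j _ => Nat.zero_le (p j)) (mem_univ i)

lemma C_mul_prod_X_pow_eq_monomial {σ R : Type*} [Fintype σ] [CommSemiring R] (a : R)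
    (s : σ → ℕ) : C a * ∏ j, X j ^ s j = monomial (Finsupp.equivFunOnFinite.symm s) a := by
  classical
  rw [prod_X_pow, C_mul_monomial, mul_one]
  congr
  ext j
  simp

noncomputable def linearForm (A : Matrix (Fin q) (Fin q) ℂ) (i : Fin q) :
    MvPolynomial (Fin q) ℂ :=
  ∑ j, C (A i j) * X j

noncomputable def prodLinearForms (A : Matrix (Fin q) (Fin q) ℂ) (p : Fin q → ℕ) :
    MvPolynomial (Fin q) ℂ :=
  ∏ i, linearForm A i ^ p i

lemma aeval_linearForm (A B : Matrix (Fin q) (Fin q) ℂ) (i : Fin q) :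
    aeval (linearForm B) (linearForm A i) = linearForm (A * B) i := by
  simp only [linearForm, map_sum, map_mul, aeval_C, aeval_X, algebraMap_eq, Matrix.mul_apply,
    sum_mul]
  simp only [mul_sum, ← mul_assoc, ← map_mul]
  exact sum_comm

lemma aeval_prodLinearForms (A B : Matrix (Fin q) (Fin q) ℂ) (p : Fin q → ℕ) :
    aeval (linearForm B) (prodLinearForms A p) = prodLinearForms (A * B) p := by
  simp only [prodLinearForms, map_prod, map_pow, aeval_linearForm]

lemma cast_multinomial_univ (f : Fin q → ℕ) :
    (Nat.multinomial univ f : ℂ) = ((∑ j, f j)! : ℕ) / (∏ j, (f j)! : ℕ) := by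
  rw [← Nat.multinomial_spec, Nat.cast_mul, mul_div_cancel_left₀]
  exact_mod_cast (prod_ne_zero_iff.2 fun j _ => Nat.factorial_ne_zero (f j))

lemma prod_multinomial_mul_prod_pow (A : Matrix (Fin q) (Fin q) ℂ) (r : Fin q → Fin q → ℕ) :
    ∏ i, ((Nat.multinomial univ (r i) : MvPolynomial (Fin q) ℂ) *
        ∏ j, (C (A i j) * X j) ^ r i j) =
      C ((∏ i, (∑ j, r i j)! : ℕ) / (∏ i, ∏ j, (r i j)! : ℕ) * ∏ i, ∏ j, A i j ^ r i j) *
        ∏ j, X j ^ ∑ i, r i j := by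
  simp only [mul_pow, prod_mul_distrib, ← map_pow, ← map_prod, ← map_natCast C]
  rw [prod_comm (f := fun i j => X j ^ r i j)]
  simp only [prod_pow_eq_pow_sum, cast_multinomial_univ, Nat.cast_prod, prod_div_distrib, map_mul,
    mul_assoc]

lemma prodLinearForms_eq_sum_MG (A : Matrix (Fin q) (Fin q) ℂ) {p : Fin q → ℕ} (hp : p ∈ V n q) :
    prodLinearForms A p = ∑ s ∈ V n q, C (MG n A s p) * ∏ j, X j ^ s j := by
  have hcol : ∀ r ∈ Fintype.piFinset fun i => piAntidiag univ (p i),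
      (fun j => ∑ i, r i j) ∈ V n q := by
    intro r hr
    simp only [Fintype.mem_piFinset, mem_piAntidiag] at hr
    rw [mem_V, sum_comm, ← mem_V.1 hp]
    exact sum_congr rfl fun i _ => (hr i).1
  simp only [prodLinearForms, linearForm, sum_pow_eq_sum_piAntidiag, prod_univ_sum,
    prod_multinomial_mul_prod_pow]
  rw [← sum_fiberwise_of_maps_to hcol]
  refine sum_congr rfl fun s _ => ?_
  rw [MG, map_sum, sum_mul]
  refine sum_congr ?_ fun r hr => ?_
  · ext r
    simp only [mem_filter, Fintype.mem_piFinset, mem_piAntidiag, mem_range, Nat.lt_succ_iff,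
      funext_iff, mem_univ, implies_true, and_true]
    refine (and_iff_right_of_imp fun ⟨hrow, _⟩ i j => ?_).symm
    calc r i j ≤ ∑ j, r i j := single_le_sum (fun j _ => Nat.zero_le (r i j)) (mem_univ j)
      _ = p i := hrow i
      _ ≤ n := le_of_mem_V hp i
  · obtain ⟨-, hrow, hcolsum⟩ := mem_filter.1 hr
    simp only [hrow, hcolsum]

lemma coeff_prodLinearForms (A : Matrix (Fin q) (Fin q) ℂ) {p t : Fin q → ℕ} (hp : p ∈ V n q)
    (ht : t ∈ V n q) :
    coeff (Finsupp.equivFunOnFinite.symm t) (prodLinearForms A p) = MG n A t p := by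
  simp [prodLinearForms_eq_sum_MG A hp, coeff_sum, C_mul_prod_X_pow_eq_monomial, coeff_monomial, ht]

lemma MG_mul (A B : Matrix (Fin q) (Fin q) ℂ) {p t : Fin q → ℕ} (hp : p ∈ V n q)
    (ht : t ∈ V n q) :
    MG n (A * B) t p = ∑ s ∈ V n q, MG n A s p * MG n B t s := by
  rw [← coeff_prodLinearForms _ hp ht, ← aeval_prodLinearForms, prodLinearForms_eq_sum_MG A hp,
    map_sum, coeff_sum]
  refine sum_congr rfl fun s hs => ?_
  have hsubst : aeval (linearForm B) (∏ j, (X j : MvPolynomial (Fin q) ℂ) ^ s j) =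
      prodLinearForms B s := by
    simp only [map_prod, map_pow, aeval_X, prodLinearForms]
  rw [map_mul, aeval_C, algebraMap_eq, hsubst, coeff_C_mul, coeff_prodLinearForms B hs ht]

lemma prodLinearForms_smul_one (c : ℂ) {p : Fin q → ℕ} (hp : p ∈ V n q) :
    prodLinearForms (c • 1) p = C (c ^ n) * ∏ j, X j ^ p j := by
  have hform : ∀ i, linearForm (c • 1 : Matrix (Fin q) (Fin q) ℂ) i = C c * X i := fun i => by
    simp [linearForm, Matrix.one_apply, apply_ite C]
  simp only [prodLinearForms, hform, mul_pow, prod_mul_distrib, ← map_pow, ← map_prod,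
    prod_pow_eq_pow_sum, mem_V.1 hp]

lemma MG_smul_one (c : ℂ) {p t : Fin q → ℕ} (hp : p ∈ V n q) (ht : t ∈ V n q) :
    MG n (c • 1) t p = if p = t then c ^ n else 0 := by
  rw [← coeff_prodLinearForms _ hp ht, prodLinearForms_smul_one c hp,
    C_mul_prod_X_pow_eq_monomial, coeff_monomial]
  simp only [EmbeddingLike.apply_eq_iff_eq]

lemma factorial_mul_MG_eq (A : Matrix (Fin q) (Fin q) ℂ) (p s : Fin q → ℕ) :
    ((∏ i, (p i)! : ℕ) : ℂ) * MG n A p s = ((∏ i, (s i)! : ℕ) : ℂ) * MG n Aᵀ s p := by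
  rw [MG, MG, mul_sum, mul_sum]
  refine sum_nbij' Function.swap Function.swap ?_ ?_ (fun _ _ => rfl) (fun _ _ => rfl) ?weight
  case weight =>
    intro r _
    simp only [Function.swap, transpose_apply]
    rw [prod_comm (f := fun i j => (r j i)!), prod_comm (f := fun i j => A j i ^ r j i)]
    ring
  all_goals
    intro r hr
    simp only [mem_filter, Fintype.mem_piFinset, Function.swap] at hr ⊢
    exact ⟨fun i j => hr.1 j i, hr.2.2, hr.2.1⟩

lemma conj_MG (A : Matrix (Fin q) (Fin q) ℂ) (p s : Fin q → ℕ) :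
    starRingEnd ℂ (MG n A p s) = MG n Aᴴᵀ p s := by
  simp [MG, map_sum, map_prod]

lemma Matrix.mul_eq_smul_one_comm {m K : Type*} [Fintype m] [DecidableEq m] [Field K]
    {A B : Matrix m m K} {c : K} (hc : c ≠ 0) (h : A * B = c • 1) : B * A = c • 1 := by
  have hinv : A * (c⁻¹ • B) = 1 := by
    rw [Matrix.mul_smul, h, smul_smul, inv_mul_cancel₀ hc, one_smul]
  have hinv' : c⁻¹ • (B * A) = 1 := by
    rw [← Matrix.smul_mul]
    exact mul_eq_one_comm.1 hinv
  rw [← hinv', smul_smul, mul_inv_cancel₀ hc, one_smul]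

theorem stmt2_general (q n : ℕ) (hq : 2 ≤ q)
    (G : Matrix (Fin q) (Fin q) ℂ) (hG : G * G.conjTranspose = (q : ℂ) • 1)
    (p t : Fin q → ℕ) (hp : p ∈ V n q) (ht : t ∈ V n q) :
    ∑ s ∈ V n q, (1 / ((∏ i, Nat.factorial (s i) : ℕ) : ℂ)) * MG n G p s * (starRingEnd ℂ) (MG n G t s) =
      (q : ℂ) ^ n / ((∏ i, Nat.factorial (p i) : ℕ) : ℂ) * (if p = t then 1 else 0) := by
  have hGtG : Gᵀ * Gᴴᵀ = (q : ℂ) • 1 := by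
    rw [← Matrix.transpose_mul, Matrix.mul_eq_smul_one_comm (by norm_cast; omega) hG,
      Matrix.transpose_smul, Matrix.transpose_one]
  have hfact : ∀ u : Fin q → ℕ, ((∏ i, (u i)! : ℕ) : ℂ) ≠ 0 := fun u =>
    Nat.cast_ne_zero.2 (prod_ne_zero_iff.2 fun i _ => factorial_ne_zero (u i))
  calc ∑ s ∈ V n q, 1 / ((∏ i, (s i)! : ℕ) : ℂ) * MG n G p s * starRingEnd ℂ (MG n G t s)
      = ∑ s ∈ V n q, 1 / ((∏ i, (p i)! : ℕ) : ℂ) * (MG n Gᵀ s p * MG n Gᴴᵀ t s) := by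
        refine sum_congr rfl fun s _ => ?_
        rw [conj_MG, one_div_mul_eq_div, one_div_mul_eq_div, div_mul_eq_mul_div,
          div_eq_div_iff (hfact s) (hfact p)]
        linear_combination MG n Gᴴᵀ t s * factorial_mul_MG_eq G p s
    _ = 1 / ((∏ i, (p i)! : ℕ) : ℂ) * MG n ((q : ℂ) • 1) t p := by
        rw [← mul_sum, ← MG_mul _ _ hp ht, hGtG]
    _ = (q : ℂ) ^ n / ((∏ i, (p i)! : ℕ) : ℂ) * (if p = t then 1 else 0) := by
        rw [MG_smul_one _ hp ht]
        split_ifs <;> ring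

theorem stmt2 (q n : ℕ) (hq : 2 ≤ q) (hn : 0 < n)
    (G : Matrix (Fin q) (Fin q) ℂ) (hG : G * G.conjTranspose = (q : ℂ) • 1)
    (p t : Fin q → ℕ) (hp : p ∈ V n q) (ht : t ∈ V n q) :
    ∑ s ∈ V n q, (1 / ((∏ i, Nat.factorial (s i) : ℕ) : ℂ)) * MG n G p s * (starRingEnd ℂ) (MG n G t s) =
      (q : ℂ) ^ n / ((∏ i, Nat.factorial (p i) : ℕ) : ℂ) * (if p = t then 1 else 0) :=
  stmt2_general q n hq G hG p t hp ht
end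

section
/- If G is a symmetric q×q complex matrix (G = Gᵀ), then for all p,s ∈ V(n,q): MG(s;p) = (p!/s!) · MG(p;s), where p! = Π_i p_i!. -/
open Finset

/-! Transposing the summation matrix `r` exchanges its margins and, `G` being symmetric, preserves
`∏ G i j ^ r i j / ∏ (r i j)!`; hence `MG n G p s / s!` is symmetric in `p` and `s`. -/

open scoped Classical in
noncomputable def contingencyTables {q : ℕ} (n : ℕ) (p s : Fin q → ℕ) : Finset (Fin q → Fin q → ℕ) :=
  (Fintype.piFinset fun _ : Fin q => Fintype.piFinset fun _ : Fin q =>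
      Finset.range (n + 1)).filter
    (fun r => (∀ i, ∑ j, r i j = s i) ∧ (∀ j, ∑ i, r i j = p j))

theorem mem_contingencyTables {q n : ℕ} {p s : Fin q → ℕ} {r : Fin q → Fin q → ℕ} :
    r ∈ contingencyTables n p s ↔
      (∀ i j, r i j < n + 1) ∧ (∀ i, ∑ j, r i j = s i) ∧ ∀ j, ∑ i, r i j = p j := by
  simp only [contingencyTables, mem_filter, Fintype.mem_piFinset, mem_range]

theorem transpose_mem_contingencyTables {q n : ℕ} {p s : Fin q → ℕ} {r : Fin q → Fin q → ℕ}
    (hr : r ∈ contingencyTables n p s) : (fun i j => r j i) ∈ contingencyTables n s p := by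
  obtain ⟨hle, hrow, hcol⟩ := mem_contingencyTables.mp hr
  exact mem_contingencyTables.mpr ⟨fun i j => hle j i, hcol, hrow⟩

noncomputable def contingencySum {q : ℕ} (n : ℕ) (G : Matrix (Fin q) (Fin q) ℂ)
    (p s : Fin q → ℕ) : ℂ :=
  ∑ r ∈ contingencyTables n p s, (∏ i, ∏ j, G i j ^ r i j) / ((∏ i, ∏ j, (r i j).factorial : ℕ) : ℂ)

theorem MG_eq_factorial_mul_contingencySum {q : ℕ} (n : ℕ) (G : Matrix (Fin q) (Fin q) ℂ)
    (p s : Fin q → ℕ) :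
    MG n G p s = ((∏ i, (s i).factorial : ℕ) : ℂ) * contingencySum n G p s := by
  rw [contingencySum, mul_sum]
  exact sum_congr rfl fun r _ => by ring

theorem contingencySum_comm {q : ℕ} (n : ℕ) {G : Matrix (Fin q) (Fin q) ℂ}
    (hG : ∀ i j, G i j = G j i) (p s : Fin q → ℕ) :
    contingencySum n G s p = contingencySum n G p s := by
  refine sum_nbij' (fun r i j => r j i) (fun r i j => r j i)
    (fun r hr => transpose_mem_contingencyTables hr) (fun r hr => transpose_mem_contingencyTables hr)
    (fun _ _ => rfl) (fun _ _ => rfl) fun r _ => ?_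
  have hfact : ∏ i, ∏ j, (r i j).factorial = ∏ i, ∏ j, (r j i).factorial := prod_comm
  have hpow : ∏ i, ∏ j, G i j ^ r i j = ∏ i, ∏ j, G i j ^ r j i := by
    rw [prod_comm]
    simp only [hG]
  rw [hfact, hpow]

theorem stmt3_general (q n : ℕ)
    (G : Matrix (Fin q) (Fin q) ℂ) (hG : ∀ i j, G i j = G j i)
    (p s : Fin q → ℕ) :
    MG n G s p = ((∏ i, Nat.factorial (p i) : ℕ) : ℂ) / ((∏ i, Nat.factorial (s i) : ℕ) : ℂ) * MG n G p s := by
  have hs : ((∏ i, (s i).factorial : ℕ) : ℂ) ≠ 0 := by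
    exact_mod_cast (prod_pos fun i _ => (s i).factorial_pos).ne'
  rw [MG_eq_factorial_mul_contingencySum, MG_eq_factorial_mul_contingencySum,
    contingencySum_comm n hG]
  field_simp

theorem stmt3 (q n : ℕ) (hq : 2 ≤ q) (hn : 0 < n)
    (G : Matrix (Fin q) (Fin q) ℂ) (hG : ∀ i j, G i j = G j i)
    (p s : Fin q → ℕ) (hp : p ∈ V n q) (hs : s ∈ V n q) :
    MG n G s p = ((∏ i, Nat.factorial (p i) : ℕ) : ℂ) / ((∏ i, Nat.factorial (s i) : ℕ) : ℂ) * MG n G p s :=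
  stmt3_general q n G hG p s
end

section
/- Let G be a q×q complex matrix with symmetric core (g_{ij} = g_{ji} for all i,j ≥ 1), first row entries g_{0j} = 1 for all j, and first column entries g_{i0} = -1 for all i ≥ 1. Then for all p,s ∈ V(n,q): MG(s;p) = (-1)^{s_0 + p_0} · (p!/s!) · MG(p;s). -/
/-
Transposing the summation matrix `r` turns `MG(s; p)` into `(p!/s!) · MG(p; s)` computed with `Gᵀ`
in place of `G`. The border conditions on `G` say exactly that `Gᵀ = D G D` with
`D = diag(-1, 1, …, 1)`, and a diagonal rescaling of rows and columns only multiplies each term of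
`MG(p; s)` by `∏ᵢ dᵢ^{sᵢ} ∏ⱼ dⱼ^{pⱼ} = (-1)^{s₀ + p₀}`, since the row and column sums of `r` are
fixed.
-/

open Finset
open scoped Matrix

theorem prod_prod_mul_mul_pow {ι M : Type*} [Fintype ι] [CommMonoid M]
    (σ τ : ι → M) (G : ι → ι → M) (r : ι → ι → ℕ) :
    ∏ i, ∏ j, (σ i * τ j * G i j) ^ r i j =
      (∏ i, σ i ^ ∑ j, r i j) * (∏ j, τ j ^ ∑ i, r i j) * ∏ i, ∏ j, G i j ^ r i j := by
  simp only [mul_pow, prod_mul_distrib, prod_pow_eq_pow_sum]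
  rw [prod_comm (f := fun i j => τ j ^ r i j)]
  simp only [prod_pow_eq_pow_sum]

theorem MG_mul_diagonal {q : ℕ} (n : ℕ) (G : Matrix (Fin q) (Fin q) ℂ) (σ τ : Fin q → ℂ)
    (p s : Fin q → ℕ) :
    MG n (Matrix.of fun i j => σ i * τ j * G i j) p s =
      (∏ i, σ i ^ s i) * (∏ j, τ j ^ p j) * MG n G p s := by
  unfold MG
  rw [mul_sum]
  refine sum_congr rfl fun r hr => ?_
  obtain ⟨-, hrow, hcol⟩ := mem_filter.mp hr
  simp only [Matrix.of_apply]
  rw [prod_prod_mul_mul_pow σ τ G r]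
  simp only [hrow, hcol]
  ring

theorem factorial_mul_MG_eq_MG_transpose {q : ℕ} (n : ℕ) (G : Matrix (Fin q) (Fin q) ℂ)
    (p s : Fin q → ℕ) :
    ((∏ i, (s i).factorial : ℕ) : ℂ) * MG n G s p =
      ((∏ i, (p i).factorial : ℕ) : ℂ) * MG n Gᵀ p s := by
  unfold MG
  rw [mul_sum, mul_sum]
  have mem_transpose : ∀ (a b : Fin q → ℕ) (r : Fin q → Fin q → ℕ),
      r ∈ (Fintype.piFinset fun _ : Fin q => Fintype.piFinset fun _ : Fin q => range (n + 1)).filter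
        (fun r => (∀ i, ∑ j, r i j = a i) ∧ (∀ j, ∑ i, r i j = b j)) →
      (fun i j => r j i) ∈ (Fintype.piFinset fun _ : Fin q => Fintype.piFinset fun _ : Fin q =>
        range (n + 1)).filter (fun r => (∀ i, ∑ j, r i j = b i) ∧ (∀ j, ∑ i, r i j = a j)) := by
    intro a b r hr
    simp only [mem_filter, Fintype.mem_piFinset] at hr ⊢
    exact ⟨fun i j => hr.1 j i, hr.2.2, hr.2.1⟩
  refine sum_nbij' (fun r i j => r j i) (fun r i j => r j i) (mem_transpose p s)
    (mem_transpose s p) (fun _ _ => rfl) (fun _ _ => rfl) fun r _ => ?_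
  have hfac : ∏ i, ∏ j, (r j i).factorial = ∏ i, ∏ j, (r i j).factorial := prod_comm
  have hpow : ∏ i, ∏ j, Gᵀ i j ^ r j i = ∏ i, ∏ j, G i j ^ r i j := prod_comm
  rw [hfac, hpow]
  ring

theorem transpose_eq_of_border {R : Type*} [CommRing R] {q : ℕ} [NeZero q]
    (G : Matrix (Fin q) (Fin q) R)
    (hrow : ∀ j, G 0 j = 1) (hcol : ∀ i, i ≠ 0 → G i 0 = -1)
    (hcore : ∀ i j, i ≠ 0 → j ≠ 0 → G i j = G j i) :
    Gᵀ = Matrix.of fun i j => (if i = 0 then -1 else 1) * (if j = 0 then -1 else 1) * G i j := by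
  ext i j
  rw [Matrix.transpose_apply, Matrix.of_apply]
  rcases eq_or_ne i 0 with rfl | hi <;> rcases eq_or_ne j 0 with rfl | hj
  · simp
  · simp [hj, hrow, hcol]
  · simp [hi, hrow, hcol]
  · simp [hi, hj, hcore i j hi hj]

theorem prod_ite_eq_pow {ι M : Type*} [Fintype ι] [DecidableEq ι] [CommMonoid M] (k : ι) (x : M)
    (p : ι → ℕ) :
    ∏ i, (if i = k then x else 1) ^ p i = x ^ p k := by
  rw [Fintype.prod_eq_single k fun i hi => by simp [hi]]
  simp

theorem stmt4_general (q n : ℕ) [NeZero q]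
    (G : Matrix (Fin q) (Fin q) ℂ)
    (hrow : ∀ j, G 0 j = 1) (hcol : ∀ i, i ≠ 0 → G i 0 = -1)
    (hcore : ∀ i j, i ≠ 0 → j ≠ 0 → G i j = G j i)
    (p s : Fin q → ℕ) :
    MG n G s p = (-1 : ℂ) ^ (s 0 + p 0) * (((∏ i, Nat.factorial (p i) : ℕ) : ℂ) / ((∏ i, Nat.factorial (s i) : ℕ) : ℂ)) * MG n G p s := by
  have hs : ((∏ i, (s i).factorial : ℕ) : ℂ) ≠ 0 := Nat.cast_ne_zero.mpr (by positivity)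
  have key := factorial_mul_MG_eq_MG_transpose n G p s
  rw [transpose_eq_of_border G hrow hcol hcore, MG_mul_diagonal, prod_ite_eq_pow,
    prod_ite_eq_pow] at key
  field_simp
  linear_combination key

theorem stmt4 (q n : ℕ) [NeZero q] (hq : 2 ≤ q) (hn : 0 < n)
    (G : Matrix (Fin q) (Fin q) ℂ)
    (hrow : ∀ j, G 0 j = 1) (hcol : ∀ i, i ≠ 0 → G i 0 = -1)
    (hcore : ∀ i j, i ≠ 0 → j ≠ 0 → G i j = G j i)
    (p s : Fin q → ℕ) (hp : p ∈ V n q) (hs : s ∈ V n q) :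
    MG n G s p = (-1 : ℂ) ^ (s 0 + p 0) * (((∏ i, Nat.factorial (p i) : ℕ) : ℂ) / ((∏ i, Nat.factorial (s i) : ℕ) : ℂ)) * MG n G p s :=
  stmt4_general q n G hrow hcol hcore p s
end

section
/- If G is a generalized Hadamard matrix, then for all p ∈ V(n,q): Σ_{s ∈ V(n,q)} (1/s!) · |MG(p;s)|² = qⁿ/p!. -/
open Finset

/-!
Index the compositions `s ∈ V(n,q)` by maps `σ : Fin n → Fin q` through their fiber sizes
`s i = #σ⁻¹{i}`; exactly `n!/s!` maps have fiber sizes `s`, so the left-hand side is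
`(1/n!) ∑_σ |MG(p; fiberCard σ)|²`. Sorting the maps `f` with fiber sizes `p` by the joint
fiber sizes `r i j = #{k | σ k = i, f k = j}` shows
`MG(p; fiberCard σ) = ∑_{fiberCard f = p} ∏_k g_{σ k, f k}`, a sum of entries of the tensor
power `G^{⊗n}`. As `Gᴴ G = q I`, the columns of `G^{⊗n}` are orthogonal of squared norm `qⁿ`,
so the sum over `σ` equals `qⁿ · #{f | fiberCard f = p} = qⁿ n!/p!`.
-/

open Equiv Matrix
open scoped Nat

section FiberCard

variable {α β : Type*} [Fintype α] [DecidableEq β]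

def fiberCard (f : α → β) (b : β) : ℕ := Fintype.card {a // f a = b}

lemma fiberCard_le (f : α → β) (b : β) : fiberCard f b ≤ Fintype.card α :=
  Fintype.card_subtype_le _

lemma sum_fiberCard [Fintype β] (f : α → β) : ∑ b, fiberCard f b = Fintype.card α := by
  simp only [fiberCard, ← Fintype.card_sigma, Fintype.card_congr (sigmaFiberEquiv f)]

lemma fiberCard_comp_perm (f : α → β) (π : Perm α) : fiberCard (f ∘ π) = fiberCard f :=
  funext fun _ => Fintype.card_congr (π.subtypeEquiv fun _ => Iff.rfl)

lemma exists_comp_perm_eq {f g : α → β} (h : fiberCard f = fiberCard g) :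
    ∃ π : Perm α, g ∘ π = f :=
  ⟨ofFiberEquiv fun b => Fintype.equivOfCardEq (congrFun h b), funext (ofFiberEquiv_map _)⟩

lemma exists_fiberCard_eq [Fintype β] (c : β → ℕ) (hc : ∑ b, c b = Fintype.card α) :
    ∃ f : α → β, fiberCard f = c := by
  let e : α ≃ Σ b, Fin (c b) := Fintype.equivOfCardEq (by simp [hc])
  refine ⟨fun a => (e a).1, funext fun b => ?_⟩
  calc fiberCard (fun a => (e a).1) b = Fintype.card {x : Σ b, Fin (c b) // x.1 = b} :=
        Fintype.card_congr (e.subtypeEquiv fun _ => Iff.rfl)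
    _ = c b := by rw [Fintype.card_congr (sigmaSubtype b), Fintype.card_fin]

/-- Orbit–stabilizer for `Perm α` acting on `α → β` by precomposition: the orbit of `f₀` consists
of the maps with the fiber sizes of `f₀`, and its stabilizer is `∏ b, Perm (f₀⁻¹{b})`. -/
theorem prod_factorial_mul_card_fiberCard_eq_factorial [DecidableEq α] [Fintype β]
    (c : β → ℕ) (hc : ∑ b, c b = Fintype.card α) :
    (∏ b, (c b)!) * Fintype.card {f : α → β // fiberCard f = c} = (Fintype.card α)! := by
  obtain ⟨f₀, rfl⟩ := exists_fiberCard_eq c hc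
  have horbit : MulAction.orbit (Perm α)ᵈᵐᵃ f₀ = {f | fiberCard f = fiberCard f₀} := by
    ext f
    constructor
    · rintro ⟨π, rfl⟩
      exact fiberCard_comp_perm f₀ _
    · intro h
      obtain ⟨π, hπ⟩ := exists_comp_perm_eq h
      exact ⟨DomMulAct.mk π, hπ⟩
  have hstab : Nat.card (MulAction.stabilizer (Perm α)ᵈᵐᵃ f₀) = ∏ b, (fiberCard f₀ b)! := by
    rw [Nat.card_congr (subtypeEquiv (p := (· ∈ MulAction.stabilizer _ f₀))
        (q := fun g : Perm α => f₀ ∘ g = f₀) DomMulAct.mk.symm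
        fun _ => DomMulAct.mem_stabilizer_iff),
      Nat.card_eq_fintype_card, DomMulAct.stabilizer_card]
    rfl
  calc (∏ b, (fiberCard f₀ b)!) * Fintype.card {f // fiberCard f = fiberCard f₀}
      = Nat.card (MulAction.orbit (Perm α)ᵈᵐᵃ f₀ × MulAction.stabilizer (Perm α)ᵈᵐᵃ f₀) := by
        rw [Nat.card_prod, horbit, hstab, mul_comm, Nat.card_eq_fintype_card]
        rfl
    _ = (Fintype.card α)! := by
        rw [Nat.card_congr (MulAction.orbitProdStabilizerEquivGroup _ f₀),
          Nat.card_congr DomMulAct.mk.symm, Nat.card_eq_fintype_card, Fintype.card_perm]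

lemma prod_comp_eq_prod_pow_fiberCard [Fintype β] {M : Type*} [CommMonoid M] (g : β → M)
    (f : α → β) : ∏ a, g (f a) = ∏ b, g b ^ fiberCard f b := by
  rw [← prod_fiberwise univ f]
  refine prod_congr rfl fun b _ => ?_
  rw [prod_congr rfl fun a ha => congrArg g (mem_filter.mp ha).2, prod_const, fiberCard,
    Fintype.card_subtype]

variable {ι : Type*} [DecidableEq ι]

lemma fiberCard_pair_eq_fiberCard_restrict (σ : α → ι) (f : α → β) (i : ι) (b : β) :
    fiberCard (fun a => (σ a, f a)) (i, b) = fiberCard (fun x : {a // σ a = i} => f x) b :=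
  Fintype.card_congr <| (subtypeEquivRight fun _ => Prod.ext_iff).trans
    (subtypeSubtypeEquivSubtypeInter _ _).symm

lemma sum_fiberCard_pair_right [Fintype β] (σ : α → ι) (f : α → β) (i : ι) :
    ∑ b, fiberCard (fun a => (σ a, f a)) (i, b) = fiberCard σ i := by
  simp_rw [fiberCard_pair_eq_fiberCard_restrict, sum_fiberCard]
  rfl

lemma sum_fiberCard_pair_left [Fintype ι] (σ : α → ι) (f : α → β) (b : β) :
    ∑ i, fiberCard (fun a => (σ a, f a)) (i, b) = fiberCard f b := by
  have hswap (i : ι) :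
      fiberCard (fun a => (σ a, f a)) (i, b) = fiberCard (fun a => (f a, σ a)) (b, i) :=
    Fintype.card_congr (subtypeEquivRight fun _ => by simp [and_comm])
  simp_rw [hswap, sum_fiberCard_pair_right]

theorem prod_factorial_mul_card_fiberCard_pair_eq_prod_factorial [DecidableEq α] [Fintype β]
    [Fintype ι] (σ : α → ι) (r : ι → β → ℕ) (hr : ∀ i, ∑ b, r i b = fiberCard σ i) :
    (∏ i, ∏ b, (r i b)!) *
        Fintype.card {f : α → β // ∀ i b, fiberCard (fun a => (σ a, f a)) (i, b) = r i b} =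
      ∏ i, (fiberCard σ i)! := by
  let e : (α → β) ≃ ∀ i, ({a // σ a = i} → β) :=
    (arrowCongr (sigmaFiberEquiv σ).symm (Equiv.refl β)).trans (piCurry fun _ _ => β)
  have he (f : α → β) (i : ι) (b : β) :
      fiberCard (fun a => (σ a, f a)) (i, b) = fiberCard (e f i) b := by
    rw [fiberCard_pair_eq_fiberCard_restrict]
    rfl
  rw [Fintype.card_congr ((e.subtypeEquiv fun f => forall_congr' fun i => ?_).trans
    (subtypePiEquivPi (p := fun i h => fiberCard h = r i))), Fintype.card_pi,
    ← prod_mul_distrib]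
  · exact prod_congr rfl fun i _ => prod_factorial_mul_card_fiberCard_eq_factorial _ (hr i)
  · simp only [he, funext_iff]

end FiberCard

namespace Matrix

def tensorPow {ι β R : Type*} [CommMonoid R] (G : Matrix ι β R) (α : Type*) [Fintype α] :
    Matrix (α → ι) (α → β) R :=
  of fun σ f => ∏ a, G (σ a) (f a)

variable {α ι β R : Type*} [Fintype α]

lemma conjTranspose_mul_tensorPow [DecidableEq α] [Fintype ι] [CommSemiring R] [StarRing R]
    (G : Matrix ι β R) : (G.tensorPow α)ᴴ * G.tensorPow α = (Gᴴ * G).tensorPow α := by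
  ext f g
  simp only [tensorPow, mul_apply, conjTranspose_apply, of_apply, star_prod,
    ← prod_mul_distrib, Fintype.prod_sum]

lemma tensorPow_smul_one [DecidableEq β] [CommSemiring R] (c : R) :
    (c • 1 : Matrix β β R).tensorPow α = c ^ Fintype.card α • 1 := by
  ext f g
  by_cases hfg : f = g
  · simp [tensorPow, hfg]
  · obtain ⟨a, ha⟩ := Function.ne_iff.mp hfg
    simp [tensorPow, hfg, prod_eq_zero (mem_univ a), ha]

lemma tensorPow_apply_eq_prod_pow_fiberCard [Fintype ι] [DecidableEq ι] [Fintype β]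
    [DecidableEq β] [CommMonoid R] (G : Matrix ι β R) (σ : α → ι) (f : α → β) :
    G.tensorPow α σ f = ∏ i, ∏ b, G i b ^ fiberCard (fun a => (σ a, f a)) (i, b) := by
  rw [tensorPow, of_apply,
    prod_comp_eq_prod_pow_fiberCard (fun x => G x.1 x.2) (fun a => (σ a, f a)),
    Fintype.prod_prod_type]

open scoped ComplexOrder in
lemma conjTranspose_mul_self_eq_smul_one_of_self_mul_conjTranspose {n 𝕜 : Type*} [Fintype n]
    [DecidableEq n] [RCLike 𝕜] {A : Matrix n n 𝕜} {c : 𝕜} (h : A * Aᴴ = c • 1) :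
    Aᴴ * A = c • 1 := by
  rcases eq_or_ne c 0 with rfl | hc
  · rw [zero_smul, self_mul_conjTranspose_eq_zero] at h
    simp [h]
  · have hinv : A * (c⁻¹ • Aᴴ) = 1 := by
      rw [Matrix.mul_smul, h, smul_smul, inv_mul_cancel₀ hc, one_smul]
    rw [show Aᴴ = c • (c⁻¹ • Aᴴ) by rw [smul_smul, mul_inv_cancel₀ hc, one_smul],
      Matrix.smul_mul, mul_eq_one_comm.mp hinv]

lemma sum_norm_sum_sq_of_conjTranspose_mul_self_eq_smul_one {κ 𝕜 : Type*} [Fintype ι]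
    [DecidableEq κ] [RCLike 𝕜] {T : Matrix ι κ 𝕜} {d : ℝ} (hT : Tᴴ * T = (d : 𝕜) • 1)
    (F : Finset κ) : ∑ i, ‖∑ j ∈ F, T i j‖ ^ 2 = d * #F := by
  apply RCLike.ofReal_injective (K := 𝕜)
  have hgram (j k : κ) : ∑ i, starRingEnd 𝕜 (T i j) * T i k = if j = k then (d : 𝕜) else 0 := by
    simpa [mul_apply, one_apply] using congrFun₂ hT j k
  push_cast
  simp only [← RCLike.conj_mul, map_sum, sum_mul_sum]
  rw [sum_comm]
  simp_rw [sum_comm (s := univ), hgram]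
  simp [mul_comm]

end Matrix

lemma mem_V_iff {n q : ℕ} {s : Fin q → ℕ} : s ∈ V n q ↔ ∑ i, s i = n := by
  simp only [V, mem_filter, Fintype.mem_piFinset, mem_range, and_iff_right_iff_imp]
  rintro rfl i
  exact Nat.lt_succ_of_le (single_le_sum (fun _ _ => Nat.zero_le _) (mem_univ i))

lemma fiberCard_mem_V {n q : ℕ} (σ : Fin n → Fin q) : fiberCard σ ∈ V n q :=
  mem_V_iff.mpr (by simp [sum_fiberCard])

lemma prod_factorial_mul_card_fiberCard_of_mem_V {n q : ℕ} {s : Fin q → ℕ} (hs : s ∈ V n q) :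
    (∏ i, (s i)!) * #{σ : Fin n → Fin q | fiberCard σ = s} = n ! := by
  simpa [Fintype.card_subtype] using prod_factorial_mul_card_fiberCard_eq_factorial
    (α := Fin n) s (by simpa using mem_V_iff.mp hs)

lemma sum_V_div_prod_factorial {n q : ℕ} (F : (Fin q → ℕ) → ℝ) :
    ∑ s ∈ V n q, F s / ((∏ i, (s i)! : ℕ) : ℝ) =
      (∑ σ : Fin n → Fin q, F (fiberCard σ)) / n ! := by
  rw [← sum_fiberwise_of_maps_to (fun σ _ => fiberCard_mem_V σ), sum_div]
  refine sum_congr rfl fun s hs => ?_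
  rw [sum_congr rfl fun σ hσ => by rw [(mem_filter.mp hσ).2], sum_const, nsmul_eq_mul,
    div_eq_div_iff (by positivity) (by positivity),
    ← prod_factorial_mul_card_fiberCard_of_mem_V hs]
  push_cast
  ring

theorem MG_fiberCard_eq_sum_tensorPow {q n : ℕ} (G : Matrix (Fin q) (Fin q) ℂ) (p : Fin q → ℕ)
    (σ : Fin n → Fin q) :
    MG n G p (fiberCard σ) = ∑ f with fiberCard f = p, G.tensorPow (Fin n) σ f := by
  set R := (Fintype.piFinset fun _ : Fin q => Fintype.piFinset fun _ : Fin q =>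
      Finset.range (n + 1)).filter
      (fun r => (∀ i, ∑ j, r i j = fiberCard σ i) ∧ (∀ j, ∑ i, r i j = p j))
  let jc (f : Fin n → Fin q) (i j : Fin q) : ℕ := fiberCard (fun k => (σ k, f k)) (i, j)
  have hmaps : ∀ f ∈ ({f | fiberCard f = p} : Finset (Fin n → Fin q)), jc f ∈ R := by
    intro f hf
    simp only [mem_filter, mem_univ, true_and] at hf
    simp only [R, jc, mem_filter, Fintype.mem_piFinset, mem_range, sum_fiberCard_pair_right,
      sum_fiberCard_pair_left, hf, implies_true, and_true]
    exact fun i j => Nat.lt_succ_of_le ((fiberCard_le _ _).trans_eq (Fintype.card_fin n))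
  rw [← sum_fiberwise_of_maps_to hmaps, MG]
  refine sum_congr (by congr!) fun r hr => ?_
  obtain ⟨hrow, hcol⟩ := (mem_filter.mp hr).2
  have hfiber : (univ.filter fun f => fiberCard f = p).filter (fun f => jc f = r) =
      univ.filter fun f => ∀ i j, jc f i j = r i j := by
    ext f
    simp only [mem_filter, mem_univ, true_and, funext_iff]
    refine ⟨And.right, fun h => ⟨fun j => ?_, h⟩⟩
    rw [← sum_fiberCard_pair_left σ f j, ← hcol j]
    exact sum_congr rfl fun i _ => h i j
  have hterm : ∀ f ∈ univ.filter fun f => ∀ i j, jc f i j = r i j,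
      G.tensorPow (Fin n) σ f = ∏ i, ∏ j, G i j ^ r i j := by
    intro f hf
    simp only [mem_filter, mem_univ, true_and] at hf
    rw [tensorPow_apply_eq_prod_pow_fiberCard]
    exact prod_congr rfl fun i _ => prod_congr rfl fun j _ => congrArg _ (hf i j)
  have hcard := prod_factorial_mul_card_fiberCard_pair_eq_prod_factorial σ r hrow
  rw [hfiber, sum_congr rfl hterm, sum_const, nsmul_eq_mul, ← Fintype.card_subtype]
  congr 1
  rw [div_eq_iff (Nat.cast_ne_zero.mpr (by positivity)), ← hcard, Nat.cast_mul, mul_comm]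
  congr!

theorem stmt14_general (q n : ℕ)
    (G : Matrix (Fin q) (Fin q) ℂ) (hG : G * G.conjTranspose = (q : ℂ) • 1)
    (p : Fin q → ℕ) (hp : p ∈ V n q) :
    ∑ s ∈ V n q, (1 / ((∏ i, Nat.factorial (s i) : ℕ) : ℝ)) * ‖MG n G p s‖ ^ 2 =
      (q : ℝ) ^ n / ((∏ i, Nat.factorial (p i) : ℕ) : ℝ) := by
  have hT : (G.tensorPow (Fin n))ᴴ * G.tensorPow (Fin n) = ((q ^ n : ℝ) : ℂ) • 1 := by
    rw [conjTranspose_mul_tensorPow,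
      conjTranspose_mul_self_eq_smul_one_of_self_mul_conjTranspose hG, tensorPow_smul_one,
      Fintype.card_fin]
    norm_cast
  simp_rw [one_div_mul_eq_div]
  rw [sum_V_div_prod_factorial fun s => ‖MG n G p s‖ ^ 2]
  simp_rw [MG_fiberCard_eq_sum_tensorPow,
    sum_norm_sum_sq_of_conjTranspose_mul_self_eq_smul_one (d := (q : ℝ) ^ n) hT]
  rw [div_eq_div_iff (by positivity) (by positivity),
    ← prod_factorial_mul_card_fiberCard_of_mem_V hp]
  push_cast
  ring

theorem stmt14 (q n : ℕ) (hq : 2 ≤ q) (hn : 0 < n)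
    (G : Matrix (Fin q) (Fin q) ℂ) (hG : G * G.conjTranspose = (q : ℂ) • 1)
    (p : Fin q → ℕ) (hp : p ∈ V n q) :
    ∑ s ∈ V n q, (1 / ((∏ i, Nat.factorial (s i) : ℕ) : ℝ)) * ‖MG n G p s‖ ^ 2 =
      (q : ℝ) ^ n / ((∏ i, Nat.factorial (p i) : ℕ) : ℝ) :=
  stmt14_general q n G hG p hp
end
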